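/- Let k ≥ 2 be an integer, a_1, …, a_k real constants, and h_1, …, h_k ∈ C¹([1,∞)) with sup_{t≥1}|h_j(t)| + sup_{t≥1} t|h_j'(t)| ≤ 1 and h_j(t), h_j'(t) → 0 as t → ∞. Set γ_j(t) = (1/(2√2))(j − (k+1)/2) ln(1152 t) + a_j + h_j(t), and for 1 ≤ i ≤ k−1 define ξ_i(t,x) = [6/(e^{√2(γ_{i+1}(t)−γ_i(t))} − 1)] { e^{−√2(x−γ_{i+1}(t))} ln(1 + e^{√2(x−γ_{i+1}(t))}) − e^{−√2(x−γ_i(t))} ln(1 + e^{√2(x−γ_i(t))}) + e^{√2(x−γ_i(t))} ln(1 + e^{−√2(x−γ_i(t))}) − e^{√2(x−γ_{i+1}(t))} ln(1 + e^{−√2(x−γ_{i+1}(t))}) }. Then for every σ ∈ (0, √2) there exist constants C > 0 and T > 1 such that for all t ≥ T and 1 ≤ i ≤ k−1: |ξ_i(t,x)| + |∂_x ξ_i(t,x)| + t|∂_t ξ_i(t,x)| ≤ C t^{−1/2} e^{−σ|x−γ_i(t)|} for x ≤ γ_i(t); ≤ C t^{−1/2} e^{−σ|x−γ_{i+1}(t)|}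 for x ≥ γ_{i+1}(t); and ≤ C t^{−1/2} for γ_i(t) ≤ x ≤ γ_{i+1}(t). -/

import Mathlib

open Real Filter

/-- The Allen–Cahn heteroclinic `ω(x) = tanh (x/√2)`. -/
noncomputable def ω (x : ℝ) : ℝ := Real.tanh (x / Real.sqrt 2)

/-- The explicit first correction function between two interfaces located at `γ₁ < γ₂`. -/
noncomputable def xiCorr (γ₁ γ₂ x : ℝ) : ℝ :=
  (6 / (Real.exp (Real.sqrt 2 * (γ₂ - γ₁)) - 1)) *
    (Real.exp (-(Real.sqrt 2) * (x - γ₂)) * Real.log (1 + Real.exp (Real.sqrt 2 * (x - γ₂)))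
      - Real.exp (-(Real.sqrt 2) * (x - γ₁)) * Real.log (1 + Real.exp (Real.sqrt 2 * (x - γ₁)))
      + Real.exp (Real.sqrt 2 * (x - γ₁)) * Real.log (1 + Real.exp (-(Real.sqrt 2) * (x - γ₁)))
      - Real.exp (Real.sqrt 2 * (x - γ₂)) * Real.log (1 + Real.exp (-(Real.sqrt 2) * (x - γ₂))))

/-- The perturbed interface locations
`γ_j(t) = (1/(2√2))(j − (k+1)/2) ln(1152 t) + a_j + h_j(t)`. -/
noncomputable def gamP (k : ℕ) (a : ℕ → ℝ) (h : ℕ → ℝ → ℝ) (j : ℕ) (t : ℝ) : ℝ :=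
  (1 / (2 * Real.sqrt 2)) * ((j : ℝ) - ((k : ℝ) + 1) / 2) * Real.log (1152 * t) + a j + h j t

/-- The first correction `ξ_i(t,x)` between the `i`-th and `(i+1)`-th interfaces. -/
noncomputable def xiP (k : ℕ) (a : ℕ → ℝ) (h : ℕ → ℝ → ℝ) (i : ℕ) (t x : ℝ) : ℝ :=
  xiCorr (gamP k a h i t) (gamP k a h (i + 1) t) x

/-!
With `f(u) = e^{-√2 u} log (1 + e^{√2 u})`, the correction is
`ξ_i = 6 / (e^{√2 (γ_{i+1} - γ_i)} - 1) ·
  (f(x - γ_{i+1}) - f(x - γ_i) + f(γ_i - x) - f(γ_{i+1} - x))`.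
The profile `f` takes values in `[0, 1]`, is `O((1 + u) e^{-√2 u})` as `u → +∞` and
`1 - O(e^{√2 u})` as `u → -∞`, and `|f'| ≤ √2 min (f, e^{√2 u})`. So the bracket and its
`x`-derivative are bounded, and `O(e^{-σ dist(x, [γ_i, γ_{i+1}])})` for every `σ < √2`: outside
`[γ_i, γ_{i+1}]` the two terms that tend to `1` cancel, and the other two decay. The prefactor
supplies `t^{-1/2}`: `√2 (γ_{i+1} - γ_i) = ½ log (1152 t) + O(1)`, so `e^{√2 (γ_{i+1} - γ_i)} ≳ √t`.
Differentiating in `t` only produces factors `γ_j'(t) = O(1/t)`, which the weight `t` absorbs.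
-/

noncomputable def corrProfile (r u : ℝ) : ℝ :=
  exp (-r * u) * log (1 + exp (r * u))

noncomputable def corrProfileDeriv (r u : ℝ) : ℝ :=
  r / (1 + exp (r * u)) - r * corrProfile r u

lemma one_sub_le_inv_one_add {v : ℝ} (hv : 0 ≤ v) : 1 - v ≤ (1 + v)⁻¹ := by
  rw [← one_div, le_div_iff₀ (by positivity)]
  nlinarith

lemma corrProfile_nonneg (r u : ℝ) : 0 ≤ corrProfile r u :=
  mul_nonneg (exp_pos _).le (log_nonneg (by linarith [exp_pos (r * u)]))

lemma corrProfile_le_one (r u : ℝ) : corrProfile r u ≤ 1 := by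
  have hlog : log (1 + exp (r * u)) ≤ exp (r * u) := by
    linarith [log_le_sub_one_of_pos (x := 1 + exp (r * u)) (by positivity)]
  calc corrProfile r u ≤ exp (-r * u) * exp (r * u) :=
        mul_le_mul_of_nonneg_left hlog (exp_pos _).le
    _ = 1 := by rw [← exp_add]; simp

lemma inv_one_add_exp_le_corrProfile (r u : ℝ) : (1 + exp (r * u))⁻¹ ≤ corrProfile r u := by
  set v := exp (r * u)
  have hv : 0 < v := exp_pos _
  calc (1 + v)⁻¹ = v⁻¹ * (1 - (1 + v)⁻¹) := by field_simp; ring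
    _ ≤ v⁻¹ * log (1 + v) := by gcongr; exact one_sub_inv_le_log_of_pos (by positivity)
    _ = corrProfile r u := by rw [corrProfile, neg_mul, exp_neg]

lemma one_sub_corrProfile_le (r u : ℝ) : 1 - corrProfile r u ≤ exp (r * u) := by
  linarith [inv_one_add_exp_le_corrProfile r u, one_sub_le_inv_one_add (exp_pos (r * u)).le]

lemma corrProfile_le_of_nonneg {r u : ℝ} (hu : 0 ≤ r * u) :
    corrProfile r u ≤ (1 + r * u) * exp (-r * u) := by
  set w := r * u
  have hlog : log (1 + exp w) ≤ w + 1 := by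
    have e : 1 + exp w = exp w * (1 + exp (-w)) := by
      rw [mul_add, ← exp_add]; simp [add_comm]
    have hle : exp (-w) ≤ 1 := exp_le_one_iff.2 (by linarith)
    rw [e, log_mul (exp_ne_zero _) (by positivity), log_exp]
    linarith [log_le_sub_one_of_pos (x := 1 + exp (-w)) (by positivity)]
  rw [corrProfile, mul_comm]
  exact mul_le_mul_of_nonneg_right (by linarith) (exp_pos _).le

lemma hasDerivAt_corrProfile (r u : ℝ) :
    HasDerivAt (corrProfile r) (corrProfileDeriv r u) u := by
  have h₁ : HasDerivAt (fun y => exp (-r * y)) (exp (-r * u) * -r) u := by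
    simpa using ((hasDerivAt_id u).const_mul (-r)).exp
  have h₂ : HasDerivAt (fun y => log (1 + exp (r * y)))
      (exp (r * u) * r / (1 + exp (r * u))) u := by
    simpa using (((hasDerivAt_id u).const_mul r).exp.const_add 1).log (by positivity)
  refine (h₁.mul h₂).congr_deriv ?_
  have e : exp (-r * u) * exp (r * u) = 1 := by rw [← exp_add]; simp
  rw [corrProfileDeriv, corrProfile, mul_div_assoc', ← mul_assoc, e, one_mul]
  ring

lemma corrProfileDeriv_nonpos {r : ℝ} (hr : 0 ≤ r) (u : ℝ) : corrProfileDeriv r u ≤ 0 := by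
  have := mul_le_mul_of_nonneg_left (inv_one_add_exp_le_corrProfile r u) hr
  rw [corrProfileDeriv, div_eq_mul_inv]
  linarith

lemma abs_corrProfileDeriv_le {r : ℝ} (hr : 0 ≤ r) (u : ℝ) :
    |corrProfileDeriv r u| ≤ r * corrProfile r u := by
  have : 0 ≤ r / (1 + exp (r * u)) := by positivity
  rw [abs_of_nonpos (corrProfileDeriv_nonpos hr u), corrProfileDeriv]
  linarith

lemma abs_corrProfileDeriv_le_exp {r : ℝ} (hr : 0 ≤ r) (u : ℝ) :
    |corrProfileDeriv r u| ≤ r * exp (r * u) := by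
  have h : corrProfile r u - exp (r * u) ≤ (1 + exp (r * u))⁻¹ :=
    (one_sub_le_inv_one_add (exp_pos (r * u)).le).trans' (by linarith [corrProfile_le_one r u])
  have := mul_le_mul_of_nonneg_left h hr
  rw [abs_of_nonpos (corrProfileDeriv_nonpos hr u), corrProfileDeriv, div_eq_mul_inv]
  linarith

lemma one_add_mul_mul_exp_neg_le {r σ u : ℝ} (hr : 0 ≤ r) (hσr : σ < r) (hu : 0 ≤ u) :
    (1 + r * u) * exp (-r * u) ≤ (1 + r / (r - σ)) * exp (-σ * u) := by
  have hδ : 0 < r - σ := sub_pos.2 hσr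
  have hlin : r * u ≤ r / (r - σ) * exp ((r - σ) * u) :=
    calc r * u = r / (r - σ) * ((r - σ) * u) := by field_simp
      _ ≤ r / (r - σ) * exp ((r - σ) * u) := by
        gcongr
        linarith [add_one_le_exp ((r - σ) * u)]
  have hone : 1 ≤ exp ((r - σ) * u) := one_le_exp (by positivity)
  have hsplit : exp (-σ * u) = exp ((r - σ) * u) * exp (-r * u) := by
    rw [← exp_add]; ring_nf
  rw [hsplit, ← mul_assoc]
  gcongr
  linarith

noncomputable def profileTail (r u : ℝ) : ℝ :=
  corrProfile r u + |corrProfileDeriv r u| + (1 - corrProfile r (-u)) + |corrProfileDeriv r (-u)|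

lemma profileTail_le {r σ u : ℝ} (hσ : 0 ≤ σ) (hσr : σ < r) (hu : 0 ≤ u) :
    profileTail r u ≤ (1 + r) * (2 + r / (r - σ)) * exp (-σ * u) := by
  have hr : 0 ≤ r := hσ.trans hσr.le
  have hpos : corrProfile r u + |corrProfileDeriv r u|
      ≤ (1 + r) * (1 + r / (r - σ)) * exp (-σ * u) :=
    calc corrProfile r u + |corrProfileDeriv r u| ≤ (1 + r) * corrProfile r u := by
          linarith [abs_corrProfileDeriv_le hr u]
      _ ≤ (1 + r) * ((1 + r * u) * exp (-r * u)) := by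
          gcongr; exact corrProfile_le_of_nonneg (by positivity)
      _ ≤ (1 + r) * ((1 + r / (r - σ)) * exp (-σ * u)) := by
          gcongr ?_ * ?_; exact one_add_mul_mul_exp_neg_le hr hσr hu
      _ = _ := by ring
  have hexp : exp (-r * u) ≤ exp (-σ * u) := exp_le_exp.2 (by nlinarith)
  have hneg : (1 - corrProfile r (-u)) + |corrProfileDeriv r (-u)| ≤ (1 + r) * exp (-σ * u) := by
    have h₁ := one_sub_corrProfile_le r (-u)
    have h₂ := abs_corrProfileDeriv_le_exp hr (-u)
    rw [mul_neg, ← neg_mul] at h₁ h₂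
    nlinarith
  rw [profileTail]
  linarith

lemma profileTail_add_le {r σ b c : ℝ} (hσ : 0 ≤ σ) (hσr : σ < r) (hb : 0 ≤ b) (hbc : b ≤ c) :
    profileTail r b + profileTail r c ≤ 2 * ((1 + r) * (2 + r / (r - σ))) * exp (-σ * b) := by
  have hr : 0 ≤ r := hσ.trans hσr.le
  have hmono : exp (-σ * c) ≤ exp (-σ * b) := exp_le_exp.2 (by nlinarith)
  have hM : 0 ≤ (1 + r) * (2 + r / (r - σ)) :=
    mul_nonneg (by linarith) (by have := div_nonneg hr (sub_pos.2 hσr).le; linarith)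
  have := profileTail_le hσ hσr hb
  have := (profileTail_le hσ hσr (hb.trans hbc)).trans (mul_le_mul_of_nonneg_left hmono hM)
  linarith

noncomputable def xiProfile (r γ₁ γ₂ x : ℝ) : ℝ :=
  corrProfile r (x - γ₂) - corrProfile r (x - γ₁) + corrProfile r (γ₁ - x) - corrProfile r (γ₂ - x)

noncomputable def xiProfileSlope (r γ₁ γ₂ x : ℝ) : ℝ :=
  |corrProfileDeriv r (x - γ₁)| + |corrProfileDeriv r (x - γ₂)|
    + |corrProfileDeriv r (γ₁ - x)| + |corrProfileDeriv r (γ₂ - x)|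

lemma xiProfile_neg (r γ₁ γ₂ x : ℝ) : xiProfile r (-γ₂) (-γ₁) (-x) = xiProfile r γ₁ γ₂ x := by
  simp only [xiProfile]; ring_nf

lemma xiProfileSlope_neg (r γ₁ γ₂ x : ℝ) :
    xiProfileSlope r (-γ₂) (-γ₁) (-x) = xiProfileSlope r γ₁ γ₂ x := by
  simp only [xiProfileSlope]; ring_nf

lemma abs_sub_le_of_le_one {p q : ℝ} (hp : p ≤ 1) (hq : q ≤ 1) : |p - q| ≤ (1 - p) + (1 - q) := by
  rw [abs_le]; constructor <;> linarith

lemma abs_xiProfile_add_slope_le_profileTail (r γ₁ γ₂ x : ℝ) :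
    |xiProfile r γ₁ γ₂ x| + xiProfileSlope r γ₁ γ₂ x
      ≤ profileTail r (γ₁ - x) + profileTail r (γ₂ - x) := by
  have hfar : |corrProfile r (x - γ₂) - corrProfile r (x - γ₁)|
      ≤ (1 - corrProfile r (x - γ₂)) + (1 - corrProfile r (x - γ₁)) :=
    abs_sub_le_of_le_one (corrProfile_le_one _ _) (corrProfile_le_one _ _)
  have hnear : |corrProfile r (γ₁ - x) - corrProfile r (γ₂ - x)|
      ≤ corrProfile r (γ₁ - x) + corrProfile r (γ₂ - x) :=
    (abs_sub _ _).trans (by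
      rw [abs_of_nonneg (corrProfile_nonneg _ _), abs_of_nonneg (corrProfile_nonneg _ _)])
  have hsplit : xiProfile r γ₁ γ₂ x = (corrProfile r (x - γ₂) - corrProfile r (x - γ₁))
      + (corrProfile r (γ₁ - x) - corrProfile r (γ₂ - x)) := by
    rw [xiProfile]; ring
  have := abs_add_le (corrProfile r (x - γ₂) - corrProfile r (x - γ₁))
    (corrProfile r (γ₁ - x) - corrProfile r (γ₂ - x))
  simp only [profileTail, xiProfileSlope, neg_sub] at *
  rw [hsplit]
  linarith

lemma abs_xiProfile_add_slope_le_profileTail' (r γ₁ γ₂ x : ℝ) :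
    |xiProfile r γ₁ γ₂ x| + xiProfileSlope r γ₁ γ₂ x
      ≤ profileTail r (x - γ₂) + profileTail r (x - γ₁) := by
  rw [← xiProfile_neg, ← xiProfileSlope_neg]
  convert abs_xiProfile_add_slope_le_profileTail r (-γ₂) (-γ₁) (-x) using 3 <;> ring

lemma abs_xiProfile_add_slope_le {r : ℝ} (hr : 0 ≤ r) (γ₁ γ₂ x : ℝ) :
    |xiProfile r γ₁ γ₂ x| + xiProfileSlope r γ₁ γ₂ x ≤ 2 + 4 * r := by
  have hf : ∀ u, |corrProfileDeriv r u| ≤ r := fun u =>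
    (abs_corrProfileDeriv_le hr u).trans (by nlinarith [corrProfile_le_one r u])
  have hG : |xiProfile r γ₁ γ₂ x| ≤ 2 := by
    have := corrProfile_le_one r (x - γ₂)
    have := corrProfile_le_one r (x - γ₁)
    have := corrProfile_le_one r (γ₁ - x)
    have := corrProfile_le_one r (γ₂ - x)
    have := corrProfile_nonneg r (x - γ₂)
    have := corrProfile_nonneg r (x - γ₁)
    have := corrProfile_nonneg r (γ₁ - x)
    have := corrProfile_nonneg r (γ₂ - x)
    rw [xiProfile, abs_le]; constructor <;> linarith
  rw [xiProfileSlope]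
  linarith [hf (x - γ₁), hf (x - γ₂), hf (γ₁ - x), hf (γ₂ - x)]

lemma abs_sub_add_sub_le (a b c d : ℝ) : |a - b + c - d| ≤ |a| + |b| + |c| + |d| := by
  linarith [abs_sub (a - b + c) d, abs_add_le (a - b) c, abs_sub a b]

lemma exists_hasDerivAt_xiProfile (r γ₁ γ₂ x : ℝ) :
    ∃ g', HasDerivAt (xiProfile r γ₁ γ₂) g' x ∧ |g'| ≤ xiProfileSlope r γ₁ γ₂ x := by
  have hsub := fun c => (hasDerivAt_corrProfile r (x - c)).comp_sub_const x c
  have hsub' := fun c => (hasDerivAt_corrProfile r (c - x)).comp_const_sub c x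
  refine ⟨_, (((hsub γ₂).sub (hsub γ₁)).add (hsub' γ₁)).sub (hsub' γ₂), ?_⟩
  refine (abs_sub_add_sub_le _ _ _ _).trans_eq ?_
  rw [xiProfileSlope, abs_neg, abs_neg]
  ring

lemma exists_hasDerivAt_xiProfile_comp {r : ℝ} {γ₁ γ₂ : ℝ → ℝ} {d₁ d₂ δ t : ℝ}
    (h₁ : HasDerivAt γ₁ d₁ t) (h₂ : HasDerivAt γ₂ d₂ t) (hd₁ : |d₁| ≤ δ) (hd₂ : |d₂| ≤ δ)
    (x : ℝ) :
    ∃ g', HasDerivAt (fun s => xiProfile r (γ₁ s) (γ₂ s) x) g' t ∧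
      |g'| ≤ δ * xiProfileSlope r (γ₁ t) (γ₂ t) x := by
  have hsub : ∀ {γ : ℝ → ℝ} {d}, HasDerivAt γ d t →
      HasDerivAt (fun s => corrProfile r (x - γ s)) (corrProfileDeriv r (x - γ t) * -d) t :=
    fun h => (hasDerivAt_corrProfile r _).comp t (h.const_sub x)
  have hsub' : ∀ {γ : ℝ → ℝ} {d}, HasDerivAt γ d t →
      HasDerivAt (fun s => corrProfile r (γ s - x)) (corrProfileDeriv r (γ t - x) * d) t :=
    fun h => (hasDerivAt_corrProfile r _).comp t (h.sub_const x)
  refine ⟨_, (((hsub h₂).sub (hsub h₁)).add (hsub' h₁)).sub (hsub' h₂), ?_⟩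
  have hterm : ∀ u d, |d| ≤ δ → |corrProfileDeriv r u * d| ≤ |corrProfileDeriv r u| * δ :=
    fun u d hd => by rw [abs_mul]; exact mul_le_mul_of_nonneg_left hd (abs_nonneg _)
  refine (abs_sub_add_sub_le _ _ _ _).trans ?_
  have := hterm (x - γ₂ t) (-d₂) (by rwa [abs_neg])
  have := hterm (x - γ₁ t) (-d₁) (by rwa [abs_neg])
  have := hterm (γ₁ t - x) d₁ hd₁
  have := hterm (γ₂ t - x) d₂ hd₂
  rw [xiProfileSlope]
  linarith

lemma abs_six_div_sub_one_le {E : ℝ} (hE : 2 ≤ E) : |6 / (E - 1)| ≤ 12 / E := by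
  rw [abs_of_pos (div_pos (by norm_num) (by linarith)),
    div_le_div_iff₀ (by linarith) (by linarith)]
  linarith

lemma div_sub_one_sq_le {E : ℝ} (hE : 2 ≤ E) : E / (E - 1) ^ 2 ≤ 4 / E := by
  rw [div_le_div_iff₀ (by nlinarith) (by linarith)]
  nlinarith

lemma exists_hasDerivAt_six_div_exp_sub_one {γ₁ γ₂ : ℝ → ℝ} {d₁ d₂ δ t : ℝ}
    (h₁ : HasDerivAt γ₁ d₁ t) (h₂ : HasDerivAt γ₂ d₂ t) (hd₁ : |d₁| ≤ δ) (hd₂ : |d₂| ≤ δ)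
    (hE : 2 ≤ exp (√2 * (γ₂ t - γ₁ t))) :
    ∃ A', HasDerivAt (fun s => 6 / (exp (√2 * (γ₂ s - γ₁ s)) - 1)) A' t ∧
      |A'| ≤ 48 * √2 * δ / exp (√2 * (γ₂ t - γ₁ t)) := by
  set E := exp (√2 * (γ₂ t - γ₁ t))
  have hden : HasDerivAt (fun s => exp (√2 * (γ₂ s - γ₁ s)) - 1) (E * (√2 * (d₂ - d₁))) t :=
    (((h₂.sub h₁).const_mul √2).exp).sub_const 1
  refine ⟨_, (hasDerivAt_const t (6 : ℝ)).div hden (by linarith), ?_⟩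
  have hd : |d₂ - d₁| ≤ 2 * δ := by linarith [abs_sub d₂ d₁]
  have hδ : 0 ≤ δ := (abs_nonneg _).trans hd₁
  calc |(0 * (E - 1) - 6 * (E * (√2 * (d₂ - d₁)))) / (E - 1) ^ 2|
      = 6 * √2 * |d₂ - d₁| * (E / (E - 1) ^ 2) := by
        rw [abs_div, abs_of_nonneg (sq_nonneg (E - 1)), zero_mul, zero_sub, abs_neg, abs_mul,
          abs_mul, abs_mul, abs_of_pos (exp_pos _), abs_of_nonneg (sqrt_nonneg 2)]
        ring
    _ ≤ 6 * √2 * (2 * δ) * (4 / E) :=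
        mul_le_mul (by gcongr) (div_sub_one_sq_le hE) (by positivity) (by positivity)
    _ = 48 * √2 * δ / E := by ring

lemma xiCorr_eq_mul_xiProfile (γ₁ γ₂ x : ℝ) :
    xiCorr γ₁ γ₂ x = 6 / (exp (√2 * (γ₂ - γ₁)) - 1) * xiProfile √2 γ₁ γ₂ x := by
  simp only [xiCorr, xiProfile, corrProfile]
  ring_nf

lemma xiCorr_weighted_le {γ₁ γ₂ : ℝ → ℝ} {d₁ d₂ δ τ t : ℝ}
    (h₁ : HasDerivAt γ₁ d₁ t) (h₂ : HasDerivAt γ₂ d₂ t) (hd₁ : |d₁| ≤ δ) (hd₂ : |d₂| ≤ δ)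
    (hτ : 0 ≤ τ) (hE : 2 ≤ exp (√2 * (γ₂ t - γ₁ t))) (x : ℝ) :
    |xiCorr (γ₁ t) (γ₂ t) x| + |deriv (fun y => xiCorr (γ₁ t) (γ₂ t) y) x|
        + τ * |deriv (fun s => xiCorr (γ₁ s) (γ₂ s) x) t|
      ≤ (12 + 48 * √2 * τ * δ) / exp (√2 * (γ₂ t - γ₁ t))
          * (|xiProfile √2 (γ₁ t) (γ₂ t) x| + xiProfileSlope √2 (γ₁ t) (γ₂ t) x) := by
  set E := exp (√2 * (γ₂ t - γ₁ t))
  set G := xiProfile √2 (γ₁ t) (γ₂ t) x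
  set P := xiProfileSlope √2 (γ₁ t) (γ₂ t) x
  have hA := abs_six_div_sub_one_le hE
  have hδ : 0 ≤ δ := (abs_nonneg _).trans hd₁
  have hP : 0 ≤ P := by simp only [P, xiProfileSlope]; positivity
  have hEpos : 0 < E := exp_pos _
  obtain ⟨gx, hgx, hgx_le⟩ := exists_hasDerivAt_xiProfile √2 (γ₁ t) (γ₂ t) x
  obtain ⟨gt, hgt, hgt_le⟩ := exists_hasDerivAt_xiProfile_comp (r := √2) h₁ h₂ hd₁ hd₂ x
  obtain ⟨A', hA', hA'_le⟩ := exists_hasDerivAt_six_div_exp_sub_one h₁ h₂ hd₁ hd₂ hE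
  have hξx : HasDerivAt (fun y => xiCorr (γ₁ t) (γ₂ t) y) (6 / (E - 1) * gx) x := by
    simp only [xiCorr_eq_mul_xiProfile]; exact hgx.const_mul _
  have hξt : HasDerivAt (fun s => xiCorr (γ₁ s) (γ₂ s) x) (A' * G + 6 / (E - 1) * gt) t := by
    simp only [xiCorr_eq_mul_xiProfile]; exact hA'.mul hgt
  have ht : |A' * G + 6 / (E - 1) * gt| ≤ 48 * √2 * δ / E * (|G| + P) := by
    have h12 : 12 ≤ 48 * √2 := by nlinarith [one_le_sqrt.2 (by norm_num : (1 : ℝ) ≤ 2)]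
    calc |A' * G + 6 / (E - 1) * gt| ≤ |A'| * |G| + |6 / (E - 1)| * |gt| := by
          rw [← abs_mul, ← abs_mul]; exact abs_add_le _ _
      _ ≤ 48 * √2 * δ / E * |G| + 12 / E * (δ * P) := by gcongr
      _ ≤ 48 * √2 * δ / E * |G| + 48 * √2 / E * (δ * P) := by gcongr
      _ = 48 * √2 * δ / E * (|G| + P) := by ring
  rw [hξx.deriv, hξt.deriv, xiCorr_eq_mul_xiProfile, abs_mul, abs_mul]
  calc |6 / (E - 1)| * |G| + |6 / (E - 1)| * |gx| + τ * |A' * G + 6 / (E - 1) * gt|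
      ≤ 12 / E * |G| + 12 / E * P + τ * (48 * √2 * δ / E * (|G| + P)) := by gcongr
    _ = (12 + 48 * √2 * τ * δ) / E * (|G| + P) := by ring

lemma div_le_mul_rpow_of_sqrt_div_le {c K E t : ℝ} (hc : 0 ≤ c) (hK : 0 < K) (ht : 0 < t)
    (hE : √t / K ≤ E) : c / E ≤ K * c * t ^ (-(1 : ℝ) / 2) := by
  have hst : 0 < √t := sqrt_pos.2 ht
  rw [show t ^ (-(1 : ℝ) / 2) = (√t)⁻¹ by rw [sqrt_eq_rpow, ← rpow_neg ht.le]; norm_num,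
    div_le_iff₀ ((div_pos hst hK).trans_le hE)]
  rw [div_le_iff₀ hK] at hE
  calc c = c * (√t)⁻¹ * √t := by field_simp
    _ ≤ c * (√t)⁻¹ * (E * K) := by gcongr
    _ = K * c * (√t)⁻¹ * E := by ring

noncomputable def gapConst (k : ℕ) (a : ℕ → ℝ) : ℝ :=
  exp (√2 * (2 * ∑ j ∈ Finset.range (k + 1), |a j| + 2))

section Interfaces

variable {k : ℕ} {a : ℕ → ℝ} {h : ℕ → ℝ → ℝ} {i : ℕ} {t : ℝ}

lemma gapConst_pos : 0 < gapConst k a := exp_pos _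

lemma sqrt_div_gapConst_le_exp_gamP_sub (ht : 0 < t) (hik : i + 1 ≤ k)
    (hhi : |h i t| ≤ 1) (hhi₁ : |h (i + 1) t| ≤ 1) :
    √t / gapConst k a ≤ exp (√2 * (gamP k a h (i + 1) t - gamP k a h i t)) := by
  have hgap : √2 * (gamP k a h (i + 1) t - gamP k a h i t)
      = log (1152 * t) / 2 + √2 * (a (i + 1) - a i + (h (i + 1) t - h i t)) := by
    have : √2 ≠ 0 := by positivity
    simp only [gamP]; push_cast; field_simp; ring
  have ha : ∀ j ≤ k, |a j| ≤ ∑ j ∈ Finset.range (k + 1), |a j| := fun j hj =>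
    Finset.single_le_sum (f := fun j => |a j|) (fun _ _ => abs_nonneg _)
      (Finset.mem_range.2 (Nat.lt_succ_of_le hj))
  have hΔ : -(2 * ∑ j ∈ Finset.range (k + 1), |a j| + 2)
      ≤ a (i + 1) - a i + (h (i + 1) t - h i t) := by
    linarith [ha i (by omega), ha (i + 1) hik, neg_abs_le (a (i + 1)), le_abs_self (a i),
      neg_abs_le (h (i + 1) t), le_abs_self (h i t)]
  have hlog : log t ≤ log (1152 * t) := log_le_log ht (by linarith)
  rw [gapConst, sqrt_eq_rpow, rpow_def_of_pos ht, ← exp_sub, hgap]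
  exact exp_le_exp.2 (by nlinarith [sqrt_nonneg 2])

lemma exists_hasDerivAt_gamP {j : ℕ} (hj : j ≤ k) (ht : 0 < t)
    (hdiff : DifferentiableAt ℝ (h j) t) (hder : t * |deriv (h j) t| ≤ 1) :
    ∃ d, HasDerivAt (gamP k a h j) d t ∧ |d| ≤ (k + 2) / t := by
  set c := 1 / (2 * √2) * ((j : ℝ) - ((k : ℝ) + 1) / 2)
  have hlog : HasDerivAt (fun s => log (1152 * s)) t⁻¹ t := by
    have := ((hasDerivAt_id t).const_mul (1152 : ℝ)).log (by positivity)
    exact this.congr_deriv (by simp [field])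
  refine ⟨c * t⁻¹ + deriv (h j) t, ((hlog.const_mul c).add_const (a j)).add hdiff.hasDerivAt, ?_⟩
  have hc : |c| ≤ k + 1 := by
    have hj' : (j : ℝ) ≤ k := by exact_mod_cast hj
    have hs : 1 ≤ 2 * √2 := by nlinarith [one_le_sqrt.2 (by norm_num : (1 : ℝ) ≤ 2)]
    rw [abs_mul, abs_of_pos (by positivity : (0 : ℝ) < 1 / (2 * √2))]
    calc 1 / (2 * √2) * |(j : ℝ) - ((k : ℝ) + 1) / 2| ≤ 1 * (k + 1) := by
          gcongr
          · exact div_le_one_of_le₀ hs (by positivity)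
          · rw [abs_le]; constructor <;> linarith [(j.cast_nonneg : (0 : ℝ) ≤ j)]
      _ = k + 1 := one_mul _
  have hh : |deriv (h j) t| ≤ 1 / t := by rw [le_div_iff₀ ht]; linarith
  calc |c * t⁻¹ + deriv (h j) t| ≤ |c| * t⁻¹ + 1 / t :=
        (abs_add_le _ _).trans (by rw [abs_mul, abs_of_pos (inv_pos.2 ht)]; gcongr)
    _ ≤ (k + 1) * t⁻¹ + 1 / t := by gcongr
    _ = (k + 2) / t := by ring

lemma two_le_exp_gamP_sub (hik : i + 1 ≤ k) (ht : 4 * gapConst k a ^ 2 + 1 ≤ t)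
    (hh₀ : |h i t| + t * |deriv (h i) t| ≤ 1)
    (hh₁ : |h (i + 1) t| + t * |deriv (h (i + 1)) t| ≤ 1) :
    2 ≤ exp (√2 * (gamP k a h (i + 1) t - gamP k a h i t)) := by
  have hK : 0 < gapConst k a := gapConst_pos
  have ht0 : 0 < t := by nlinarith
  have hsqrt : 2 * gapConst k a ≤ √t := by
    rw [← sqrt_sq (by linarith : 0 ≤ 2 * gapConst k a)]
    exact sqrt_le_sqrt (by linarith)
  refine le_trans ?_ (sqrt_div_gapConst_le_exp_gamP_sub ht0 hik
    (by nlinarith [abs_nonneg (deriv (h i) t)]) (by nlinarith [abs_nonneg (deriv (h (i + 1)) t)]))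
  rwa [le_div_iff₀ hK]

lemma gamP_le_gamP_succ (hik : i + 1 ≤ k) (ht : 4 * gapConst k a ^ 2 + 1 ≤ t)
    (hh₀ : |h i t| + t * |deriv (h i) t| ≤ 1)
    (hh₁ : |h (i + 1) t| + t * |deriv (h (i + 1)) t| ≤ 1) :
    gamP k a h i t ≤ gamP k a h (i + 1) t := by
  have hE := two_le_exp_gamP_sub hik ht hh₀ hh₁
  exact sub_nonneg.1 (nonneg_of_mul_nonneg_right (one_le_exp_iff.1 (by linarith)) (by positivity))

lemma xiP_weighted_le (hik : i + 1 ≤ k) (ht : 4 * gapConst k a ^ 2 + 1 ≤ t)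
    (hh₀ : |h i t| + t * |deriv (h i) t| ≤ 1)
    (hh₁ : |h (i + 1) t| + t * |deriv (h (i + 1)) t| ≤ 1)
    (hdiff₀ : DifferentiableAt ℝ (h i) t) (hdiff₁ : DifferentiableAt ℝ (h (i + 1)) t) (x : ℝ) :
    |xiP k a h i t x| + |deriv (fun y => xiP k a h i t y) x|
        + t * |deriv (fun s => xiP k a h i s x) t|
      ≤ gapConst k a * (12 + 48 * √2 * (k + 2)) * t ^ (-(1 : ℝ) / 2)
          * (|xiProfile √2 (gamP k a h i t) (gamP k a h (i + 1) t) x|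
            + xiProfileSlope √2 (gamP k a h i t) (gamP k a h (i + 1) t) x) := by
  have ht0 : 0 < t := by nlinarith
  have hK : 0 < gapConst k a := gapConst_pos
  have habs₀ : |h i t| ≤ 1 := by nlinarith [abs_nonneg (deriv (h i) t)]
  have habs₁ : |h (i + 1) t| ≤ 1 := by nlinarith [abs_nonneg (deriv (h (i + 1)) t)]
  obtain ⟨d₁, hd₁, hd₁_le⟩ := exists_hasDerivAt_gamP (k := k) (a := a) (j := i) (by omega) ht0
    hdiff₀ (by linarith [abs_nonneg (h i t)])
  obtain ⟨d₂, hd₂, hd₂_le⟩ := exists_hasDerivAt_gamP (a := a) hik ht0 hdiff₁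
    (by linarith [abs_nonneg (h (i + 1) t)])
  have hgap := sqrt_div_gapConst_le_exp_gamP_sub (a := a) ht0 hik habs₀ habs₁
  set E := exp (√2 * (gamP k a h (i + 1) t - gamP k a h i t))
  have hrate : (12 + 48 * √2 * t * ((k + 2) / t)) / E
      ≤ gapConst k a * (12 + 48 * √2 * (k + 2)) * t ^ (-(1 : ℝ) / 2) := by
    rw [show 48 * √2 * t * ((k + 2) / t) = 48 * √2 * (k + 2) by field_simp]
    exact div_le_mul_rpow_of_sqrt_div_le (by positivity) hK ht0 hgap
  have hE := two_le_exp_gamP_sub hik ht hh₀ hh₁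
  exact (xiCorr_weighted_le hd₁ hd₂ hd₁_le hd₂_le ht0.le hE x).trans
    (mul_le_mul_of_nonneg_right hrate (by simp only [xiProfileSlope]; positivity))

end Interfaces

theorem xiP_estimates_general (k : ℕ) (a : ℕ → ℝ) (h : ℕ → ℝ → ℝ)
    (hreg : ∀ j, 1 ≤ j → j ≤ k → ContDiffOn ℝ 1 (h j) (Set.Ici (1 : ℝ)))
    (hbd : ∀ j, 1 ≤ j → j ≤ k →
      ∀ t : ℝ, 1 ≤ t → ∀ s : ℝ, 1 ≤ s → |h j t| + s * |deriv (h j) s| ≤ 1)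
    (σ : ℝ) (hσ0 : 0 < σ) (hσ2 : σ < Real.sqrt 2) :
    ∃ C : ℝ, 0 < C ∧ ∃ T : ℝ, 1 < T ∧
      ∀ t : ℝ, T ≤ t → ∀ i, 1 ≤ i → i ≤ k - 1 → ∀ x : ℝ,
        (x ≤ gamP k a h i t →
          |xiP k a h i t x| + |deriv (fun y => xiP k a h i t y) x|
              + t * |deriv (fun s => xiP k a h i s x) t|
            ≤ C * t ^ (-(1 : ℝ) / 2) * Real.exp (-σ * |x - gamP k a h i t|)) ∧
        (gamP k a h (i + 1) t ≤ x →
          |xiP k a h i t x| + |deriv (fun y => xiP k a h i t y) x|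
              + t * |deriv (fun s => xiP k a h i s x) t|
            ≤ C * t ^ (-(1 : ℝ) / 2) * Real.exp (-σ * |x - gamP k a h (i + 1) t|)) ∧
        (gamP k a h i t ≤ x → x ≤ gamP k a h (i + 1) t →
          |xiP k a h i t x| + |deriv (fun y => xiP k a h i t y) x|
              + t * |deriv (fun s => xiP k a h i s x) t|
            ≤ C * t ^ (-(1 : ℝ) / 2)) := by
  set K := gapConst k a
  have hK : 0 < K := gapConst_pos
  set M := 2 * ((1 + √2) * (2 + √2 / (√2 - σ)))
  have hM : 2 + 4 * √2 ≤ M := by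
    have := div_nonneg (sqrt_nonneg 2) (sub_pos.2 hσ2).le
    nlinarith [sqrt_nonneg 2]
  refine ⟨K * (12 + 48 * √2 * (k + 2)) * M, mul_pos (by positivity) (by positivity),
    4 * K ^ 2 + 1, lt_add_of_pos_left 1 (by positivity), ?_⟩
  intro t ht i hi hik x
  have ht1 : 1 < t := by nlinarith [sq_nonneg K]
  have h₀ := hbd i hi (by omega) t ht1.le t ht1.le
  have h₁ := hbd (i + 1) (by omega) (by omega) t ht1.le t ht1.le
  have hdiff := fun j hj hjk =>
    ((hreg j hj hjk).contDiffAt (Ici_mem_nhds ht1)).differentiableAt one_ne_zero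
  have hξ := xiP_weighted_le (by omega) ht h₀ h₁ (hdiff i hi (by omega))
    (hdiff (i + 1) (by omega) (by omega)) x
  have hγ := gamP_le_gamP_succ (by omega) ht h₀ h₁
  have hweight : ∀ W, |xiProfile √2 (gamP k a h i t) (gamP k a h (i + 1) t) x|
      + xiProfileSlope √2 (gamP k a h i t) (gamP k a h (i + 1) t) x ≤ M * W →
      |xiP k a h i t x| + |deriv (fun y => xiP k a h i t y) x|
        + t * |deriv (fun s => xiP k a h i s x) t|
      ≤ K * (12 + 48 * √2 * (k + 2)) * M * t ^ (-(1 : ℝ) / 2) * W := fun W hW =>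
    hξ.trans ((mul_le_mul_of_nonneg_left hW (by positivity)).trans_eq (by ring))
  refine ⟨fun hx => ?_, fun hx => ?_, fun _ _ => ?_⟩
  · rw [abs_of_nonpos (sub_nonpos.2 hx), neg_sub]
    exact hweight _ ((abs_xiProfile_add_slope_le_profileTail _ _ _ _).trans
      (profileTail_add_le hσ0.le hσ2 (by linarith) (by linarith)))
  · rw [abs_of_nonneg (sub_nonneg.2 hx)]
    exact hweight _ ((abs_xiProfile_add_slope_le_profileTail' _ _ _ _).trans
      (profileTail_add_le hσ0.le hσ2 (by linarith) (by linarith)))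
  · refine (hweight 1 ?_).trans_eq (mul_one _)
    rw [mul_one]
    exact (abs_xiProfile_add_slope_le (sqrt_nonneg 2) _ _ _).trans hM

/-- Decay estimates for the first correction functions `ξ_i` (Lemma on `ξ_i`). -/
theorem xiP_estimates (k : ℕ) (hk : 2 ≤ k) (a : ℕ → ℝ) (h : ℕ → ℝ → ℝ)
    (hreg : ∀ j, 1 ≤ j → j ≤ k → ContDiffOn ℝ 1 (h j) (Set.Ici (1 : ℝ)))
    (hbd : ∀ j, 1 ≤ j → j ≤ k →
      ∀ t : ℝ, 1 ≤ t → ∀ s : ℝ, 1 ≤ s → |h j t| + s * |deriv (h j) s| ≤ 1)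
    (hlim : ∀ j, 1 ≤ j → j ≤ k →
      Tendsto (h j) atTop (nhds 0) ∧ Tendsto (deriv (h j)) atTop (nhds 0))
    (σ : ℝ) (hσ0 : 0 < σ) (hσ2 : σ < Real.sqrt 2) :
    ∃ C : ℝ, 0 < C ∧ ∃ T : ℝ, 1 < T ∧
      ∀ t : ℝ, T ≤ t → ∀ i, 1 ≤ i → i ≤ k - 1 → ∀ x : ℝ,
        (x ≤ gamP k a h i t →
          |xiP k a h i t x| + |deriv (fun y => xiP k a h i t y) x|
              + t * |deriv (fun s => xiP k a h i s x) t|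
            ≤ C * t ^ (-(1 : ℝ) / 2) * Real.exp (-σ * |x - gamP k a h i t|)) ∧
        (gamP k a h (i + 1) t ≤ x →
          |xiP k a h i t x| + |deriv (fun y => xiP k a h i t y) x|
              + t * |deriv (fun s => xiP k a h i s x) t|
            ≤ C * t ^ (-(1 : ℝ) / 2) * Real.exp (-σ * |x - gamP k a h (i + 1) t|)) ∧
        (gamP k a h i t ≤ x → x ≤ gamP k a h (i + 1) t →
          |xiP k a h i t x| + |deriv (fun y => xiP k a h i t y) x|
              + t * |deriv (fun s => xiP k a h i s x) t|
            ≤ C * t ^ (-(1 : ℝ) / 2)) :=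
  xiP_estimates_general k a h hreg hbd σ hσ0 hσ2
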